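/- There exists a constant C > 0 such that for all x ∈ (-1,1) one has ∫_x^1 z·g(x,z) dz ≥ C·(1-x²)². -/

import Mathlib

/-- The Green function of the square root of the Laplacian on `(-1,1)`
with homogeneous Dirichlet exterior condition. -/
noncomputable def G (x y : ℝ) : ℝ :=
  if x ∈ Set.Ioo (-1:ℝ) 1 ∧ y ∈ Set.Ioo (-1:ℝ) 1 then
    (1 / Real.pi) * Real.log ((1 - x*y + Real.sqrt ((1 - x^2) * (1 - y^2))) / |x - y|)
  else 0


/-- The Green function `g(x,z)` for the operator `u ↦ (I u)'` on `(-1,1)`. -/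
noncomputable def g (x z : ℝ) : ℝ :=
  if x ∈ Set.Ioo (-1:ℝ) 1 then
    (1/2) * ((z - x) * G x z + (z + x) * G x (-z))
  else 0

/-!
On `(-1,1)²` we have `G = L / π` with `L(x,y) = log ((1 - xy + s) / |x - y|)`,
`s = √((1-x²)(1-y²))`, and `sinh L(x,y) = s / |x - y|` because `(1 - xy)² = (x - y)² + s²`.

The integrand `z g(x,z)` is even in `z` and nonnegative. The only nontrivial case is
`0 < z < x`, where `sinh L(x,-z) = s/(x+z) ≤ s/(x-z) = sinh L(x,z)`; then
`(x - z) L(x,z) ≤ (x + z) L(x,-z)` is the monotonicity of `sinh t / t` on `(0,∞)`.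
So the integral over `(x,1)` dominates the one over the middle third of `(|x|,1)`, where
`L(|x|,z) ≥ log (3/2)` and `z ≥ 1/3`; this gives `(1-|x|)² log (3/2) / (54π) ≥ C (1-x²)²`.
The integrand is integrable since `(y - x) L(x,y)` has only a `t log t` singularity.
-/

open Real Set MeasureTheory

lemma convexOn_sinh : ConvexOn ℝ (Ici 0) sinh :=
  MonotoneOn.convexOn_of_deriv (convex_Ici 0) continuous_sinh.continuousOn
    differentiable_sinh.differentiableOn
    (by
      rw [Real.deriv_sinh, interior_Ici]
      exact cosh_strictMonoOn.monotoneOn.mono Ioi_subset_Ici_self)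

lemma sinh_div_self_le {a b : ℝ} (ha : 0 < a) (hab : a ≤ b) : sinh a / a ≤ sinh b / b := by
  simpa using convexOn_sinh.secant_mono self_mem_Ici ha.le (ha.trans_le hab).le ha.ne'
    (ha.trans_le hab).ne' hab

lemma sinh_log_add_div {u s c : ℝ} (hu : 0 ≤ u) (hs : 0 ≤ s) (hc : 0 < c)
    (h : u ^ 2 = c ^ 2 + s ^ 2) : sinh (log ((u + s) / c)) = s / c := by
  have hus : 0 < u + s := by nlinarith
  rw [sinh_log (div_pos hus hc)]
  field_simp
  linear_combination h

noncomputable def greenNumerator (x y : ℝ) : ℝ := 1 - x * y + √((1 - x ^ 2) * (1 - y ^ 2))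

noncomputable def greenLog (x y : ℝ) : ℝ := log (greenNumerator x y / |x - y|)

lemma G_of_mem {x y : ℝ} (hx : x ∈ Ioo (-1) 1) (hy : y ∈ Ioo (-1) 1) :
    G x y = 1 / π * greenLog x y := by
  rw [G, if_pos ⟨hx, hy⟩]; rfl

lemma G_of_notMem {x y : ℝ} (h : ¬(x ∈ Ioo (-1) 1 ∧ y ∈ Ioo (-1) 1)) : G x y = 0 := by
  rw [G, if_neg h]

lemma greenNumerator_pos {x y : ℝ} (hx : x ∈ Ioo (-1) 1) (hy : y ∈ Icc (-1) 1) :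
    0 < greenNumerator x y := by
  obtain ⟨hx₁, hx₂⟩ := hx
  obtain ⟨hy₁, hy₂⟩ := hy
  have : 0 < 1 - x * y := by rcases le_total 0 y with hy | hy <;> nlinarith
  unfold greenNumerator
  positivity

lemma sinh_greenLog {x y : ℝ} (hx : x ∈ Ioo (-1) 1) (hy : y ∈ Ioo (-1) 1) (hxy : x ≠ y) :
    sinh (greenLog x y) = √((1 - x ^ 2) * (1 - y ^ 2)) / |x - y| := by
  obtain ⟨hx₁, hx₂⟩ := hx
  obtain ⟨hy₁, hy₂⟩ := hy
  refine sinh_log_add_div (by nlinarith) (sqrt_nonneg _) (abs_pos.2 (sub_ne_zero.2 hxy)) ?_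
  rw [sq_abs, sq_sqrt (mul_nonneg (by nlinarith) (by nlinarith))]
  ring

lemma greenLog_nonneg {x y : ℝ} (hx : x ∈ Ioo (-1) 1) (hy : y ∈ Ioo (-1) 1) :
    0 ≤ greenLog x y := by
  rcases eq_or_ne x y with rfl | hxy
  · simp [greenLog]
  · rw [← sinh_nonneg_iff, sinh_greenLog hx hy hxy]
    positivity

lemma G_nonneg (x y : ℝ) : 0 ≤ G x y := by
  by_cases h : x ∈ Ioo (-1) 1 ∧ y ∈ Ioo (-1) 1
  · rw [G_of_mem h.1 h.2]
    exact mul_nonneg (by positivity) (greenLog_nonneg h.1 h.2)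
  · rw [G_of_notMem h]

lemma neg_mem_Ioo_neg_one_one {x : ℝ} : -x ∈ Ioo (-1 : ℝ) 1 ↔ x ∈ Ioo (-1) 1 := by
  rw [neg_mem_Ioo_iff, neg_neg]

lemma G_neg_neg (x y : ℝ) : G (-x) (-y) = G x y := by
  simp only [G, neg_mem_Ioo_neg_one_one, neg_mul_neg, neg_sq, sub_neg_eq_add]
  rw [neg_add_eq_sub, abs_sub_comm]

lemma g_neg_left (x z : ℝ) : g (-x) z = g x z := by
  have h : G (-x) z = G x (-z) := by rw [← G_neg_neg x (-z), neg_neg]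
  simp only [g, neg_mem_Ioo_neg_one_one, h, G_neg_neg]
  split_ifs <;> ring

lemma g_abs_left (x z : ℝ) : g |x| z = g x z := by
  rcases abs_choice x with h | h <;> rw [h]
  exact g_neg_left x z

lemma g_neg_right (x z : ℝ) : g x (-z) = -g x z := by
  simp only [g, neg_neg]
  split_ifs <;> ring

lemma sub_mul_greenLog_le {x z : ℝ} (hz : 0 < z) (hzx : z < x) (hx : x < 1) :
    (x - z) * greenLog x z ≤ (x + z) * greenLog x (-z) := by
  have hxI : x ∈ Ioo (-1) 1 := ⟨by linarith, hx⟩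
  have hzI : z ∈ Ioo (-1) 1 := ⟨by linarith, by linarith⟩
  set s := √((1 - x ^ 2) * (1 - z ^ 2))
  have hs : 0 < s := sqrt_pos.2 (mul_pos (by nlinarith) (by nlinarith))
  have h₁ : sinh (greenLog x (-z)) = s / (x + z) := by
    rw [sinh_greenLog hxI (neg_mem_Ioo_neg_one_one.2 hzI) (by linarith), neg_sq, sub_neg_eq_add,
      abs_of_pos (by linarith)]
  have h₂ : sinh (greenLog x z) = s / (x - z) := by
    rw [sinh_greenLog hxI hzI hzx.ne', abs_of_pos (by linarith)]
  have ht₁ : 0 < greenLog x (-z) := by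
    rw [← sinh_pos_iff, h₁]; exact div_pos hs (by linarith)
  have ht₁₂ : greenLog x (-z) ≤ greenLog x z := by
    rw [← sinh_le_sinh, h₁, h₂]
    exact div_le_div_of_nonneg_left hs.le (by linarith) (by linarith)
  have key := sinh_div_self_le ht₁ ht₁₂
  rwa [h₁, h₂, div_div, div_div, div_le_div_iff_of_pos_left hs (mul_pos (by linarith) ht₁)
    (mul_pos (by linarith) (ht₁.trans_le ht₁₂))] at key

lemma g_nonneg_of_nonneg {x z : ℝ} (hx : 0 ≤ x) (hz : 0 ≤ z) : 0 ≤ g x z := by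
  rcases le_or_gt x z with hxz | hzx
  · unfold g
    split_ifs
    · exact mul_nonneg (by norm_num) (add_nonneg (mul_nonneg (sub_nonneg.2 hxz) (G_nonneg x z))
        (mul_nonneg (by linarith) (G_nonneg x (-z))))
    · rfl
  rcases hz.eq_or_lt with rfl | hz
  · simp [g]
  rcases lt_or_ge x 1 with hx₁ | hx₁
  · have hxI : x ∈ Ioo (-1) 1 := ⟨by linarith, hx₁⟩
    have hzI : z ∈ Ioo (-1) 1 := ⟨by linarith, by linarith⟩
    rw [g, if_pos hxI, G_of_mem hxI hzI, G_of_mem hxI (neg_mem_Ioo_neg_one_one.2 hzI)]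
    have key : 0 ≤ (x + z) * greenLog x (-z) - (x - z) * greenLog x z :=
      sub_nonneg.2 (sub_mul_greenLog_le hz hzx hx₁)
    calc (0 : ℝ) ≤ ((x + z) * greenLog x (-z) - (x - z) * greenLog x z) / (2 * π) := by
          positivity
      _ = _ := by ring
  · rw [g, if_neg (fun h => by linarith [h.2])]

lemma g_nonneg (x : ℝ) {z : ℝ} (hz : 0 ≤ z) : 0 ≤ g x z := by
  rw [← g_abs_left]
  exact g_nonneg_of_nonneg (abs_nonneg x) hz

lemma mul_g_nonneg (x z : ℝ) : 0 ≤ z * g x z := by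
  rcases le_total 0 z with hz | hz
  · exact mul_nonneg hz (g_nonneg x hz)
  · have := g_nonneg x (neg_nonneg.2 hz)
    rw [g_neg_right] at this
    nlinarith

lemma mul_log_div_abs {c N : ℝ} (hN : N ≠ 0) : c * log (N / |c|) = c * log N - c * log c := by
  rcases eq_or_ne c 0 with rfl | hc
  · simp
  · rw [log_div hN (abs_ne_zero.2 hc), log_abs]; ring

lemma continuousOn_sub_mul_greenLog {x : ℝ} (hx : x ∈ Ioo (-1) 1) :
    ContinuousOn (fun y => (y - x) * greenLog x y) (Icc (-1) 1) := by
  have hN : ∀ y ∈ Icc (-1 : ℝ) 1, greenNumerator x y ≠ 0 :=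
    fun y hy => (greenNumerator_pos hx hy).ne'
  have hformula : ContinuousOn
      (fun y => (y - x) * log (greenNumerator x y) - (y - x) * log (y - x)) (Icc (-1) 1) :=
    ((continuous_sub_right x).continuousOn.mul
      (ContinuousOn.log (by unfold greenNumerator; fun_prop) hN)).sub
      (continuous_mul_log.comp (continuous_sub_right x)).continuousOn
  refine hformula.congr fun y hy => ?_
  simp only [greenLog]
  rw [abs_sub_comm, mul_log_div_abs (hN y hy)]

lemma integrableOn_mul_g {x : ℝ} (hx : x ∈ Ioo (-1) 1) :
    IntegrableOn (fun z => z * g x z) (Icc (-1) 1) := by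
  set h := fun y => (y - x) * greenLog x y
  have hh : ContinuousOn h (Icc (-1) 1) := continuousOn_sub_mul_greenLog hx
  have hh' : ContinuousOn (fun z => h (-z)) (Icc (-1) 1) :=
    hh.comp continuousOn_neg fun z hz => ⟨by linarith [hz.2], by linarith [hz.1]⟩
  have hcont : ContinuousOn (fun z => z * ((h z - h (-z)) / (2 * π))) (Icc (-1) 1) :=
    continuousOn_id.mul ((hh.sub hh').div_const _)
  rw [integrableOn_Icc_iff_integrableOn_Ioo]
  refine ((hcont.integrableOn_compact isCompact_Icc).mono_set Ioo_subset_Icc_self).congr_fun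
    (fun z hz => ?_) measurableSet_Ioo
  simp only [h, g, if_pos hx, G_of_mem hx hz, G_of_mem hx (neg_mem_Ioo_neg_one_one.2 hz)]
  ring

lemma G_ge_log_three_halves {a z : ℝ} (ha : 0 ≤ a) (haz : a < z) (hz : 3 * z ≤ a + 2) :
    log (3 / 2) / π ≤ G a z := by
  rw [G_of_mem ⟨by linarith, by linarith⟩ ⟨by linarith, by linarith⟩, greenLog, greenNumerator,
    abs_sub_comm, abs_of_pos (sub_pos.2 haz), one_div_mul_eq_div]
  refine div_le_div_of_nonneg_right (log_le_log (by norm_num) ?_) pi_pos.le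
  rw [le_div_iff₀ (sub_pos.2 haz)]
  nlinarith [sqrt_nonneg ((1 - a ^ 2) * (1 - z ^ 2)),
    mul_nonneg ha (by linarith : (0 : ℝ) ≤ 1 - z)]

lemma mul_g_ge {x z : ℝ} (hx : |x| < 1) (hz₁ : 2 * |x| + 1 ≤ 3 * z)
    (hz₂ : 3 * z ≤ |x| + 2) :
    log (3 / 2) / π * (1 - |x|) / 18 ≤ z * g x z := by
  set a := |x|
  have ha : 0 ≤ a := abs_nonneg x
  have haz : a < z := by linarith
  have hg : (z - a) / 2 * (log (3 / 2) / π) ≤ g x z := by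
    rw [← g_abs_left, g, if_pos ⟨by linarith, by linarith⟩]
    nlinarith [G_ge_log_three_halves ha haz hz₂, G_nonneg a (-z)]
  have hz : 1 / 3 ≤ z := by linarith
  have hza : (1 - a) / 3 ≤ z - a := by linarith
  calc log (3 / 2) / π * (1 - a) / 18
        = 1 / 3 * ((1 - a) / 3 / 2 * (log (3 / 2) / π)) := by ring
    _ ≤ z * ((z - a) / 2 * (log (3 / 2) / π)) := by gcongr
    _ ≤ z * g x z := mul_le_mul_of_nonneg_left hg (by linarith)

lemma intervalIntegrable_mul_g {x a b : ℝ} (hx : x ∈ Ioo (-1) 1) (ha : a ∈ Icc (-1) 1)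
    (hb : b ∈ Icc (-1) 1) : IntervalIntegrable (fun z => z * g x z) volume a b :=
  ((integrableOn_mul_g hx).mono_set (uIcc_subset_Icc ha hb)).intervalIntegrable

theorem stmt_7 :
    ∃ C : ℝ, 0 < C ∧ ∀ x ∈ Set.Ioo (-1:ℝ) 1,
      C * (1 - x^2)^2 ≤ ∫ z in x..1, z * g x z := by
  set c := log (3 / 2) / π
  have hc : 0 < c := div_pos (log_pos (by norm_num)) pi_pos
  refine ⟨c / 216, by positivity, fun x hx => ?_⟩
  set a := |x|
  have ha : a < 1 := abs_lt.2 hx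
  have hxa : x ≤ a := le_abs_self x
  have ha₀ : 0 ≤ a := abs_nonneg x
  have hx₁ : -1 < x := hx.1
  calc c / 216 * (1 - x ^ 2) ^ 2 = c / 216 * (1 - a) ^ 2 * (1 + a) ^ 2 := by
        rw [← sq_abs x]; ring
    _ ≤ c / 216 * (1 - a) ^ 2 * 2 ^ 2 := by gcongr; linarith
    _ = ((a + 2) / 3 - (2 * a + 1) / 3) * (c * (1 - a) / 18) := by ring
    _ = ∫ _ in (2 * a + 1) / 3..(a + 2) / 3, c * (1 - a) / 18 := by
        rw [intervalIntegral.integral_const, smul_eq_mul]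
    _ ≤ ∫ z in (2 * a + 1) / 3..(a + 2) / 3, z * g x z :=
        intervalIntegral.integral_mono_on (by linarith) intervalIntegrable_const
          (intervalIntegrable_mul_g hx ⟨by linarith, by linarith⟩ ⟨by linarith, by linarith⟩)
          fun z hz => mul_g_ge ha (by linarith [hz.1]) (by linarith [hz.2])
    _ ≤ ∫ z in x..1, z * g x z :=
        intervalIntegral.integral_mono_interval (by linarith) (by linarith) (by linarith)
          (ae_of_all _ (mul_g_nonneg x))
          (intervalIntegrable_mul_g hx ⟨by linarith, by linarith⟩ ⟨by linarith, le_rfl⟩)
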